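/- arXiv:2603.24462 — 2 statements merged into one kernel-verified Lean document; each statement's English description precedes it below -/
import Mathlib

section
/- Let A ∈ SL(2,ℝ) be hyperbolic with eigenvalues λ and λ⁻¹ where |λ| > 1. Let V(A) be the eigenspace of A for eigenvalue λ, and U(A) the most expanded singular direction of A. Then the angle between V(A) and A·U(A) is at most π/(2|λ|·‖A‖). -/
open Matrix Real

noncomputable def matCLM (A : Matrix (Fin 2) (Fin 2) ℝ) :
    EuclideanSpace ℝ (Fin 2) →L[ℝ] EuclideanSpace ℝ (Fin 2) :=
  Matrix.toEuclideanCLM (𝕜 := ℝ) A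

lemma matCLM_apply (A : Matrix (Fin 2) (Fin 2) ℝ) (x : EuclideanSpace ℝ (Fin 2)) (i : Fin 2) :
    matCLM A x i = A i 0 * x 0 + A i 1 * x 1 := by
  have := congrFun (Matrix.ofLp_toEuclideanCLM (𝕜 := ℝ) A x) i
  simpa [Matrix.mulVec, dotProduct, Fin.sum_univ_two, matCLM] using this

lemma inner_coords (x y : EuclideanSpace ℝ (Fin 2)) :
    (inner (𝕜 := ℝ) x y : ℝ) = x 0 * y 0 + x 1 * y 1 := by
  simp [PiLp.inner_apply, Fin.sum_univ_two, mul_comm]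

lemma norm_sq_coords (x : EuclideanSpace ℝ (Fin 2)) :
    ‖x‖ ^ 2 = x 0 ^ 2 + x 1 ^ 2 := by
  have := inner_coords x x
  rw [real_inner_self_eq_norm_sq] at this
  linarith [this]

noncomputable def cross (x y : EuclideanSpace ℝ (Fin 2)) : ℝ := x 0 * y 1 - x 1 * y 0

lemma cross_map (A : Matrix (Fin 2) (Fin 2) ℝ) (x y : EuclideanSpace ℝ (Fin 2)) :
    cross (matCLM A x) (matCLM A y) = A.det * cross x y := by
  simp only [cross, matCLM_apply, Matrix.det_fin_two]
  ring

lemma lagrange (x y : EuclideanSpace ℝ (Fin 2)) :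
    (inner (𝕜 := ℝ) x y : ℝ) ^ 2 + cross x y ^ 2 = ‖x‖ ^ 2 * ‖y‖ ^ 2 := by
  rw [inner_coords, norm_sq_coords, norm_sq_coords, cross]
  ring

theorem stmt_14 (A : Matrix (Fin 2) (Fin 2) ℝ) (hA : A.det = 1)
    (lam : ℝ) (hlam : 1 < |lam|)
    (v : EuclideanSpace ℝ (Fin 2)) (hv : ‖v‖ = 1) (hveig : matCLM A v = lam • v)
    (u : EuclideanSpace ℝ (Fin 2)) (hu : ‖u‖ = 1)
    (huexp : ‖matCLM A u‖ = ‖matCLM A‖) :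
    Real.arccos |inner (𝕜 := ℝ) v ((‖matCLM A u‖)⁻¹ • (matCLM A u))|
      ≤ π / (2 * |lam| * ‖matCLM A‖) := by
  set T := matCLM A with hT
  -- norms
  have hTv : ‖T v‖ = |lam| := by rw [hveig, norm_smul, hv]; simp
  have hlam0 : 0 < |lam| := by linarith
  have hTnorm : |lam| ≤ ‖T‖ := by
    have := T.le_opNorm v
    rw [hTv, hv, mul_one] at this
    exact this
  have hTpos : (0:ℝ) < ‖T‖ := lt_of_lt_of_le hlam0 hTnorm
  have hTu : ‖T u‖ = ‖T‖ := huexp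
  have hTupos : (0:ℝ) < ‖T u‖ := hTu ▸ hTpos
  -- the inner product
  set c : ℝ := inner (𝕜 := ℝ) v ((‖T u‖)⁻¹ • (T u)) with hc
  have hc' : c = (‖T u‖)⁻¹ * inner (𝕜 := ℝ) v (T u) := by
    rw [hc, real_inner_smul_right]
  -- cross bound
  have hcross : cross (T u) (T v) = cross u v := by rw [cross_map, hA, one_mul]
  have hcrossTv : cross (T u) (T v) = lam * cross (T u) v := by
    rw [hveig]; simp [cross]; ring
  have hcrossuv : cross u v ^ 2 ≤ 1 := by
    have := lagrange u v
    rw [hu, hv] at this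
    nlinarith [sq_nonneg (inner (𝕜 := ℝ) u v : ℝ)]
  have hkey : cross (T u) v ^ 2 ≤ 1 / lam ^ 2 := by
    have h1 : lam * cross (T u) v = cross u v := by rw [← hcrossTv, hcross]
    have hlne : lam ≠ 0 := by intro h; rw [h] at hlam0; simp at hlam0
    have hl2 : (0:ℝ) < lam ^ 2 := by positivity
    rw [div_eq_inv_mul, le_inv_mul_iff₀ hl2]
    calc lam ^ 2 * cross (T u) v ^ 2 = (lam * cross (T u) v) ^ 2 := by ring
      _ = cross u v ^ 2 := by rw [h1]
      _ ≤ 1 := hcrossuv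
  -- 1 - c^2 bound
  have hLag : (inner (𝕜 := ℝ) v (T u) : ℝ) ^ 2 + cross (T u) v ^ 2 = ‖T u‖ ^ 2 := by
    have := lagrange (T u) v
    rw [hv, real_inner_comm] at this
    have hcr : cross (T u) v = cross (T u) v := rfl
    nlinarith [this]
  have hone : c ^ 2 + ((‖T u‖)⁻¹ * cross (T u) v) ^ 2 = 1 := by
    have hinv : (‖T u‖)⁻¹ ^ 2 * (‖T u‖ ^ 2) = 1 := by
      rw [← mul_pow, inv_mul_cancel₀ (ne_of_gt hTupos), one_pow]
    calc c ^ 2 + ((‖T u‖)⁻¹ * cross (T u) v) ^ 2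
        = (‖T u‖)⁻¹ ^ 2 * ((inner (𝕜 := ℝ) v (T u) : ℝ) ^ 2 + cross (T u) v ^ 2) := by
          rw [hc']; ring
      _ = (‖T u‖)⁻¹ ^ 2 * (‖T u‖ ^ 2) := by rw [hLag]
      _ = 1 := hinv
  have h1c : 1 - c ^ 2 ≤ (1 / (|lam| * ‖T‖)) ^ 2 := by
    have h2 : ((‖T u‖)⁻¹ * cross (T u) v) ^ 2 ≤ (1 / (|lam| * ‖T‖)) ^ 2 := by
      rw [← hTu]
      have : (1 / (|lam| * ‖T u‖)) ^ 2 = (1/ lam ^2) * ((‖T u‖)⁻¹)^2 := by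
        rw [div_pow, mul_pow, sq_abs, one_pow, one_div, mul_inv, ← one_div, inv_pow]
      rw [this]
      have := mul_le_mul_of_nonneg_right hkey (sq_nonneg ((‖T u‖)⁻¹))
      calc ((‖T u‖)⁻¹ * cross (T u) v) ^ 2 = cross (T u) v ^ 2 * ((‖T u‖)⁻¹)^2 := by ring
        _ ≤ 1 / lam ^ 2 * ((‖T u‖)⁻¹)^2 := this
    linarith
  -- |c| ≤ 1
  have hc2 : c ^ 2 ≤ 1 := by nlinarith [sq_nonneg ((‖T u‖)⁻¹ * cross (T u) v)]
  -- final trigonometric step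
  have hbndpos : (0:ℝ) < |lam| * ‖T‖ := mul_pos hlam0 hTpos
  have hθ0 : 0 ≤ Real.arccos |c| := Real.arccos_nonneg _
  have hθπ : Real.arccos |c| ≤ π / 2 := Real.arccos_le_pi_div_two.mpr (abs_nonneg c)
  have hsin : Real.sin (Real.arccos |c|) = Real.sqrt (1 - c ^ 2) := by
    rw [Real.sin_arccos, sq_abs]
  have hsqrt : Real.sqrt (1 - c ^ 2) ≤ 1 / (|lam| * ‖T‖) := by
    have h := Real.sqrt_le_sqrt h1c
    rwa [Real.sqrt_sq (by positivity)] at h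
  have hjordan := Real.mul_le_sin hθ0 hθπ
  rw [hsin] at hjordan
  have hπ := Real.pi_pos
  have hid : (π / 2) * (2 / π) = 1 := by
    rw [div_mul_div_comm, mul_comm]
    exact div_self (by positivity)
  have hfinal : Real.arccos |c| ≤ π / 2 * (1 / (|lam| * ‖T‖)) := by
    have h2 : 2 / π * Real.arccos |c| ≤ 1 / (|lam| * ‖T‖) := le_trans hjordan hsqrt
    calc Real.arccos |c| = (π / 2 * (2 / π)) * Real.arccos |c| := by rw [hid, one_mul]
      _ = π / 2 * (2 / π * Real.arccos |c|) := by ring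
      _ ≤ π / 2 * (1 / (|lam| * ‖T‖)) := by
          exact mul_le_mul_of_nonneg_left h2 (by positivity)
  calc Real.arccos |c| ≤ π / 2 * (1 / (|lam| * ‖T‖)) := hfinal
    _ = π / (2 * |lam| * ‖T‖) := by
        rw [div_mul_div_comm, mul_one, ← mul_assoc]
end

section
/- Let A ∈ SL(2,ℝ) with ‖A‖ > 1, and suppose v is a unit vector with |A⁻¹ v| = R < 1. Then the angle between the line spanned by v and the contracting direction S(A⁻¹) of A⁻¹ satisfies ∡(span v, S(A⁻¹)) ≤ (π/2)·R/‖A‖. -/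
/-! With `B = A⁻¹` and `ω` the area form of the plane, `det B = 1` gives
`|ω v s| = |ω (B v) (B s)| ≤ ‖B v‖ ‖B s‖ = R / ‖B‖`. The same area argument applied to `u` and
its quarter turn `J u`, for which `ω u (J u) = ‖u‖²`, shows `‖A‖ ≤ ‖A⁻¹‖` and conversely, so
`‖B‖ = ‖A‖`. Finally `|ω v s|` is the sine of the angle between the two lines, and Jordan's
inequality `θ ≤ (π / 2) sin θ` on `[0, π / 2]` turns the sine bound into the angle bound. -/

open Matrix Real

open Module
open scoped RealInnerProductSpace EuclideanSpace

namespace Orientation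

variable {E : Type*} [NormedAddCommGroup E] [InnerProductSpace ℝ E] [Fact (finrank ℝ E = 2)]
  (o : Orientation ℝ E (Fin 2))

theorem areaForm_comp_linearMap (f : E →ₗ[ℝ] E) (x y : E) :
    o.areaForm (f x) (f y) = LinearMap.det f * o.areaForm x y := by
  let b := o.finOrthonormalBasis two_pos Fact.out
  have hb : o.volumeForm = b.toBasis.det :=
    o.volumeForm_robust b (o.finOrthonormalBasis_orientation two_pos Fact.out)
  have hfxy : ![f x, f y] = f ∘ ![x, y] := by
    ext i; fin_cases i <;> rfl
  rw [areaForm_to_volumeForm, areaForm_to_volumeForm, hb, hfxy, b.toBasis.det_comp]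

theorem abs_det_mul_abs_areaForm_le (f : E →ₗ[ℝ] E) (x y : E) :
    |LinearMap.det f| * |o.areaForm x y| ≤ ‖f x‖ * ‖f y‖ := by
  rw [← abs_mul, ← areaForm_comp_linearMap]
  exact o.abs_areaForm_le _ _

theorem arccos_abs_inner_le {x y : E} (hx : ‖x‖ = 1) (hy : ‖y‖ = 1) :
    arccos |⟪x, y⟫| ≤ π / 2 * |o.areaForm x y| := by
  set a := |⟪x, y⟫|
  have hsin : sin (arccos a) = |o.areaForm x y| := by
    have := o.inner_sq_add_areaForm_sq x y
    rw [hx, hy] at this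
    rw [sin_arccos, sq_abs, ← sqrt_sq_eq_abs]
    congr 1
    linarith
  have hjordan := mul_le_sin (arccos_nonneg a) (arccos_le_pi_div_two.2 (abs_nonneg _))
  rw [hsin] at hjordan
  rw [div_mul_eq_mul_div, div_le_iff₀ pi_pos] at hjordan
  linarith

end Orientation

namespace ContinuousLinearMap

attribute [local instance] FiniteDimensional.of_fact_finrank_eq_two

variable {E : Type*} [NormedAddCommGroup E] [InnerProductSpace ℝ E] [Fact (finrank ℝ E = 2)]

theorem abs_det_mul_opNorm_le_of_leftInverse {f g : E →L[ℝ] E} (hgf : Function.LeftInverse g f) :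
    |LinearMap.det (g : E →ₗ[ℝ] E)| * ‖f‖ ≤ ‖g‖ := by
  let o : Orientation ℝ E (Fin 2) := (finBasisOfFinrankEq ℝ E Fact.out).orientation
  set c := LinearMap.det (g : E →ₗ[ℝ] E)
  suffices h : ∀ x, |c| * ‖f x‖ ≤ ‖g‖ * ‖x‖ by
    rw [← Real.norm_eq_abs, ← norm_smul]
    refine opNorm_le_bound _ (norm_nonneg g) fun x ↦ ?_
    rw [_root_.smul_apply, norm_smul, Real.norm_eq_abs]
    exact h x
  intro x
  set u := f x
  rcases (norm_nonneg u).eq_or_lt with hu | hu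
  · rw [← hu, mul_zero]; positivity
  have harea : |c| * ‖u‖ ^ 2 ≤ ‖x‖ * (‖g‖ * ‖u‖) := by
    calc |c| * ‖u‖ ^ 2 = |c| * |o.areaForm u (o.rightAngleRotation u)| := by
          rw [o.areaForm_rightAngleRotation_right, real_inner_self_eq_norm_sq, abs_sq]
      _ ≤ ‖g u‖ * ‖g (o.rightAngleRotation u)‖ := o.abs_det_mul_abs_areaForm_le g _ _
      _ ≤ ‖x‖ * (‖g‖ * ‖u‖) := by
          rw [hgf x]
          gcongr
          exact (g.le_opNorm _).trans_eq (by rw [LinearIsometryEquiv.norm_map])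
  nlinarith

end ContinuousLinearMap

theorem det_matCLM (A : Matrix (Fin 2) (Fin 2) ℝ) :
    LinearMap.det (matCLM A : EuclideanSpace ℝ (Fin 2) →ₗ[ℝ] EuclideanSpace ℝ (Fin 2)) = A.det :=
  LinearMap.det_toLin _ A

theorem leftInverse_matCLM_inv {A : Matrix (Fin 2) (Fin 2) ℝ} (hA : IsUnit A.det) :
    Function.LeftInverse (matCLM A⁻¹) (matCLM A) := fun x ↦ by
  change (matCLM A⁻¹ * matCLM A) x = x
  rw [matCLM, matCLM, ← map_mul, nonsing_inv_mul A hA, map_one]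
  rfl

theorem norm_matCLM_inv {A : Matrix (Fin 2) (Fin 2) ℝ} (hA : A.det = 1) :
    ‖matCLM A⁻¹‖ = ‖matCLM A‖ := by
  apply le_antisymm
  · simpa [det_matCLM, hA] using
      ContinuousLinearMap.abs_det_mul_opNorm_le_of_leftInverse
        (leftInverse_matCLM_inv (A := A⁻¹) (by simp [hA]))
  · simpa [det_matCLM, hA] using
      ContinuousLinearMap.abs_det_mul_opNorm_le_of_leftInverse
        (leftInverse_matCLM_inv (A := A) (by simp [hA]))

theorem stmt_15_general (A : Matrix (Fin 2) (Fin 2) ℝ) (hA : A.det = 1)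
    (v : EuclideanSpace ℝ (Fin 2)) (hv : ‖v‖ = 1)
    (R : ℝ) (hR : ‖matCLM A⁻¹ v‖ = R)
    (s : EuclideanSpace ℝ (Fin 2)) (hs : ‖s‖ = 1)
    (hscon : ‖matCLM A⁻¹ s‖ = ‖matCLM A⁻¹‖⁻¹) :
    Real.arccos |inner (𝕜 := ℝ) v s| ≤ (π / 2) * R / ‖matCLM A‖ := by
  let o : Orientation ℝ (EuclideanSpace ℝ (Fin 2)) (Fin 2) :=
    (EuclideanSpace.basisFun (Fin 2) ℝ).toBasis.orientation
  have harea : |o.areaForm v s| ≤ R / ‖matCLM A‖ := by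
    have := o.abs_det_mul_abs_areaForm_le (matCLM A⁻¹) v s
    simpa [det_matCLM, hA, hR, hscon, norm_matCLM_inv hA, div_eq_mul_inv] using this
  calc arccos |⟪v, s⟫| ≤ π / 2 * |o.areaForm v s| := o.arccos_abs_inner_le hv hs
    _ ≤ π / 2 * (R / ‖matCLM A‖) := by gcongr
    _ = π / 2 * R / ‖matCLM A‖ := by ring

theorem stmt_15 (A : Matrix (Fin 2) (Fin 2) ℝ) (hA : A.det = 1)
    (hnorm : 1 < ‖matCLM A‖)
    (v : EuclideanSpace ℝ (Fin 2)) (hv : ‖v‖ = 1)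
    (R : ℝ) (hR : ‖matCLM A⁻¹ v‖ = R) (hR1 : R < 1)
    (s : EuclideanSpace ℝ (Fin 2)) (hs : ‖s‖ = 1)
    (hscon : ‖matCLM A⁻¹ s‖ = ‖matCLM A⁻¹‖⁻¹) :
    Real.arccos |inner (𝕜 := ℝ) v s| ≤ (π / 2) * R / ‖matCLM A‖ :=
  stmt_15_general A hA v hv R hR s hs hscon
end
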